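/- arXiv:2303.03038 — 3 statements merged into one kernel-verified Lean document; each statement's English description precedes it below -/
import Mathlib

section
/- Triangle inequality part of Theorem 4.1, general case: with the admissibility structure fixed, for every real q ≥ 1 and families f, g, h : ι → ℝ⁴ with level maps ℓ_f, ℓ_g, ℓ_h : ι → Λ and contour maps φ_f, φ_g, φ_h : ι → P, one has d_{W,q}(f, h) ≤ d_{W,q}(f, g) + d_{W,q}(g, h) in [0, ∞]. (The proof composes admissible permutations and applies Minkowski's inequality to the resulting ℓ^q cost sums.) -/
/-!
Composing an admissible matching of `f` with `g` and one of `g` with `h` gives an admissible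
matching of `f` with `h`. Its cost is bounded pointwise by the triangle inequality in `ℝ⁴`, and
then, as an `ℓ^q` norm, by the sum of the two costs via Minkowski's inequality; taking infima
gives the claim.
-/

open scoped ENNReal

/-- A permutation `σ` is admissible from `(f, ℓf, φf)` to `(g, ℓg, φg)` if it preserves
levels (`ℓg ∘ σ = ℓf`) and maps contours to contours via some bijection `β`
(`φg ∘ σ = β ∘ φf`), modelling the matching criteria (C1)–(C3). -/
def Admissible {ι Λ P : Type*} (ℓf : ι → Λ) (φf : ι → P)
    (ℓg : ι → Λ) (φg : ι → P) (σ : Equiv.Perm ι) : Prop :=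
  ℓg ∘ σ = ℓf ∧ ∃ β : P ≃ P, φg ∘ σ = β ∘ φf

/-- The constrained `q`-Wasserstein distance between labelled families of points of
`ℝ⁴ = (Fin 4 → ℝ)` (sup norm), in `[0, ∞]`: the infimum over admissible permutations
of `(∑ i, ‖f i - g (σ i)‖ ^ q) ^ (1/q)`, with value `∞` if no admissible permutation
exists. -/
noncomputable def dWq {ι Λ P : Type*} [Fintype ι] (q : ℝ)
    (f : ι → Fin 4 → ℝ) (ℓf : ι → Λ) (φf : ι → P)
    (g : ι → Fin 4 → ℝ) (ℓg : ι → Λ) (φg : ι → P) : ℝ≥0∞ :=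
  ⨅ σ : Equiv.Perm ι, ⨅ _ : Admissible ℓf φf ℓg φg σ,
    (∑ i, (‖f i - g (σ i)‖₊ : ℝ≥0∞) ^ q) ^ (1 / q)

theorem Admissible.trans {ι Λ P : Type*} {ℓf ℓg ℓh : ι → Λ} {φf φg φh : ι → P}
    {σ τ : Equiv.Perm ι} (hσ : Admissible ℓf φf ℓg φg σ) (hτ : Admissible ℓg φg ℓh φh τ) :
    Admissible ℓf φf ℓh φh (σ.trans τ) := by
  obtain ⟨hℓσ, β, hφσ⟩ := hσ
  obtain ⟨hℓτ, γ, hφτ⟩ := hτ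
  refine ⟨?_, β.trans γ, ?_⟩
  · rw [Equiv.coe_trans, ← Function.comp_assoc, hℓτ, hℓσ]
  · rw [Equiv.coe_trans, ← Function.comp_assoc, hφτ, Function.comp_assoc, hφσ,
      Equiv.coe_trans, Function.comp_assoc]

theorem ENNReal.Lp_le_add_of_le_add {ι : Type*} (s : Finset ι) {p : ℝ} (hp : 1 ≤ p)
    {a b c : ι → ℝ≥0∞} (habc : ∀ i ∈ s, a i ≤ b i + c i) :
    (∑ i ∈ s, a i ^ p) ^ (1 / p) ≤
      (∑ i ∈ s, b i ^ p) ^ (1 / p) + (∑ i ∈ s, c i ^ p) ^ (1 / p) := by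
  calc (∑ i ∈ s, a i ^ p) ^ (1 / p)
      ≤ (∑ i ∈ s, (b i + c i) ^ p) ^ (1 / p) := by
        gcongr with i hi
        exact habc i hi
    _ ≤ _ := ENNReal.Lp_add_le s b c hp

theorem Lp_nnnorm_sub_comp_le {ι E : Type*} [Fintype ι] [SeminormedAddCommGroup E]
    {p : ℝ} (hp : 1 ≤ p) (f g h : ι → E) (σ τ : Equiv.Perm ι) :
    (∑ i, (‖f i - h (τ (σ i))‖₊ : ℝ≥0∞) ^ p) ^ (1 / p) ≤
      (∑ i, (‖f i - g (σ i)‖₊ : ℝ≥0∞) ^ p) ^ (1 / p) +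
        (∑ i, (‖g i - h (τ i)‖₊ : ℝ≥0∞) ^ p) ^ (1 / p) := by
  have hreindex : ∑ i, (‖g (σ i) - h (τ (σ i))‖₊ : ℝ≥0∞) ^ p
      = ∑ i, (‖g i - h (τ i)‖₊ : ℝ≥0∞) ^ p :=
    Equiv.sum_comp σ fun i ↦ (‖g i - h (τ i)‖₊ : ℝ≥0∞) ^ p
  rw [← hreindex]
  refine ENNReal.Lp_le_add_of_le_add _ hp fun i _ ↦ ?_
  rw [← ENNReal.coe_add, ENNReal.coe_le_coe, ← sub_add_sub_cancel (f i) (g (σ i))]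
  exact nnnorm_add_le _ _

/-- Triangle inequality part of Theorem 4.1 for general `q ≥ 1`. -/
theorem dWq_triangle {ι Λ P : Type*} [Fintype ι] (q : ℝ) (hq : 1 ≤ q)
    (f g h : ι → Fin 4 → ℝ) (ℓf ℓg ℓh : ι → Λ) (φf φg φh : ι → P) :
    dWq q f ℓf φf h ℓh φh ≤ dWq q f ℓf φf g ℓg φg + dWq q g ℓg φg h ℓh φh := by
  simp only [dWq, ENNReal.iInf_add, ENNReal.add_iInf, le_iInf_iff]
  intro τ hτ σ hσ
  exact (iInf₂_le (σ.trans τ) (hσ.trans hτ)).trans (Lp_nnnorm_sub_comp_le hq f g h σ τ)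
end

section
/- Lemma E.1 (exchange argument, two-point form): let q ≥ 1 be a real number, let a ≤ b, c ≤ d, a' ≤ b', c' ≤ d' be real numbers, and set x = ![a, b, c, d], y = ![a', b', c', d'] in ℝ⁴. If ‖x − y‖ > max(b − a, max(d − c, max(b' − a', d' − c'))), then ‖x − Diag(x)‖^q + ‖y − Diag(y)‖^q < ‖x − y‖^q. Consequently, in an optimal matching between multi-dimensional persistence diagrams (where matching to diagonal projections is allowed), any matched pair x, y satisfies ‖x − y‖ ≤ max(b − a, d − c, b' − a', d' − c'). -/
/-- The diagonal projection of a point `![a, b, c, d]` of a multi-dimensional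
persistence diagram of a bivariate field:
`Diag ![a, b, c, d] = ![(a+b)/2, (a+b)/2, (c+d)/2, (c+d)/2]`. -/
noncomputable def Diag4 (x : Fin 4 → ℝ) : Fin 4 → ℝ :=
  ![(x 0 + x 1) / 2, (x 0 + x 1) / 2, (x 2 + x 3) / 2, (x 2 + x 3) / 2]

/-- Lemma E.1 (exchange argument, two-point form): if two matched points of
multi-dimensional persistence diagrams are farther apart than the largest persistence
involved, matching each to its diagonal projection is strictly cheaper. -/
theorem diag_exchange (q : ℝ) (hq : 1 ≤ q) (a b c d a' b' c' d' : ℝ)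
    (hab : a ≤ b) (hcd : c ≤ d) (hab' : a' ≤ b') (hcd' : c' ≤ d')
    (hfar : max (b - a) (max (d - c) (max (b' - a') (d' - c')))
      < ‖(![a, b, c, d] : Fin 4 → ℝ) - ![a', b', c', d']‖) :
    ‖(![a, b, c, d] : Fin 4 → ℝ) - Diag4 ![a, b, c, d]‖ ^ q
      + ‖(![a', b', c', d'] : Fin 4 → ℝ) - Diag4 ![a', b', c', d']‖ ^ q
      < ‖(![a, b, c, d] : Fin 4 → ℝ) - ![a', b', c', d']‖ ^ q := by
  set M : ℝ := max (b - a) (max (d - c) (max (b' - a') (d' - c'))) with hM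
  set N : ℝ := ‖(![a, b, c, d] : Fin 4 → ℝ) - ![a', b', c', d']‖ with hN
  have h1 : b - a ≤ M := le_max_left _ _
  have h2 : d - c ≤ M := le_trans (le_max_left _ _) (le_max_right _ _)
  have h3 : b' - a' ≤ M := le_trans (le_trans (le_max_left _ _) (le_max_right _ _))
    (le_max_right _ _)
  have h4 : d' - c' ≤ M := le_trans (le_trans (le_max_right _ _) (le_max_right _ _))
    (le_max_right _ _)
  have hM0 : 0 ≤ M := le_trans (by linarith) h1
  have hM2 : (0:ℝ) ≤ M / 2 := by linarith
  have hq0 : 0 ≤ q := le_trans zero_le_one hq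
  have hbound : ∀ u v w z : ℝ, u ≤ v → w ≤ z → v - u ≤ M → z - w ≤ M →
      ‖(![u, v, w, z] : Fin 4 → ℝ) - Diag4 ![u, v, w, z]‖ ≤ M / 2 := by
    intro u v w z huv hwz hvM hzM
    rw [pi_norm_le_iff_of_nonneg hM2]
    intro i
    fin_cases i <;>
      simp [Diag4, Pi.sub_apply, Real.norm_eq_abs, abs_le] <;>
      constructor <;> linarith
  have hx := hbound a b c d hab hcd h1 h2
  have hy := hbound a' b' c' d' hab' hcd' h3 h4
  have hxq : ‖(![a, b, c, d] : Fin 4 → ℝ) - Diag4 ![a, b, c, d]‖ ^ q ≤ (M / 2) ^ q :=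
    Real.rpow_le_rpow (norm_nonneg _) hx hq0
  have hyq : ‖(![a', b', c', d'] : Fin 4 → ℝ) - Diag4 ![a', b', c', d']‖ ^ q ≤ (M / 2) ^ q :=
    Real.rpow_le_rpow (norm_nonneg _) hy hq0
  have hdiv : (M / 2) ^ q = M ^ q / 2 ^ q := Real.div_rpow hM0 (by norm_num : (0:ℝ) ≤ 2) q
  have h2q : (2:ℝ) ≤ 2 ^ q := by
    calc (2:ℝ) = 2 ^ (1:ℝ) := (Real.rpow_one 2).symm
    _ ≤ 2 ^ q := Real.rpow_le_rpow_of_exponent_le one_le_two hq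
  have h2qpos : (0:ℝ) < 2 ^ q := Real.rpow_pos_of_pos (by norm_num) q
  have hMq0 : 0 ≤ M ^ q := Real.rpow_nonneg hM0 q
  have hsum : (M / 2) ^ q + (M / 2) ^ q ≤ M ^ q := by
    rw [hdiv]
    rw [← add_div, div_le_iff₀ h2qpos]
    nlinarith
  have hlast : M ^ q < N ^ q :=
    Real.rpow_lt_rpow hM0 hfar (lt_of_lt_of_le zero_lt_one hq)
  linarith
end

section
/- Stability bound (core of Lemma 4.1): let ι₁, ι₂ be finite index types of cardinalities n₁, n₂, let q ≥ 1 and M ≥ 0 be real numbers, and let f : ι₁ → ℝ⁴, g : ι₂ → ℝ⁴ be families such that every point f i = ![aᵢ, bᵢ, cᵢ, dᵢ] satisfies aᵢ ≤ bᵢ, cᵢ ≤ dᵢ, bᵢ − aᵢ ≤ M and dᵢ − cᵢ ≤ M, and similarly for every point of g. Define the diagonal-augmented families f̃, g̃ : ι₁ ⊕ ι₂ → ℝ⁴ by f̃(inl i) = f i, f̃(inr j) = Diag(g j), g̃(inl i) = Diag(f i), g̃(inr j) = g j. Then D_q(f̃, g̃) ≤ (n₁ · M^q + n₂ · M^q)^{1/q}.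 (In Lemma 4.1, n₁ and n₂ are bounded by N_{RG_{f₁}}·C_{f₁}·max_p C_{f₂^p} and N_{RG_{g₁}}·C_{g₁}·max_p C_{g₂^p} respectively, and M = max of the amplitudes of f₁, f₂, g₁, g₂.) -/
/-! The identity permutation already witnesses the bound: it pairs every point with its own
diagonal projection, and `‖x - Diag4 x‖` is half the larger of the two persistences of `x`,
so every matched pair is at distance at most `M`. -/

/-- The `q`-Wasserstein matching distance between two finite families of points in a
seminormed additive commutative group: the infimum over permutations `σ` of
`(∑ i, ‖f i - g (σ i)‖ ^ q) ^ (1/q)`. -/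
noncomputable def wassersteinDist {ι : Type*} [Fintype ι] {E : Type*}
    [SeminormedAddCommGroup E] (q : ℝ) (f g : ι → E) : ℝ :=
  ⨅ σ : Equiv.Perm ι, (∑ i, ‖f i - g (σ i)‖ ^ q) ^ (1 / q)

section wassersteinDist

variable {ι : Type*} [Fintype ι] {E : Type*} [SeminormedAddCommGroup E]

theorem wassersteinDist_le (q : ℝ) (f g : ι → E) (σ : Equiv.Perm ι) :
    wassersteinDist q f g ≤ (∑ i, ‖f i - g (σ i)‖ ^ q) ^ (1 / q) := by
  refine ciInf_le ⟨0, ?_⟩ σ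
  rintro _ ⟨τ, rfl⟩
  positivity

theorem wassersteinDist_le_of_norm_sub_le {q M : ℝ} (hq : 0 ≤ q) {f g : ι → E}
    (h : ∀ i, ‖f i - g i‖ ≤ M) :
    wassersteinDist q f g ≤ (Fintype.card ι * M ^ q) ^ (1 / q) := by
  have hsum : ∑ i, ‖f i - g i‖ ^ q ≤ Fintype.card ι * M ^ q := by
    calc ∑ i, ‖f i - g i‖ ^ q ≤ ∑ _i : ι, M ^ q :=
          Finset.sum_le_sum fun i _ => Real.rpow_le_rpow (norm_nonneg _) (h i) hq
      _ = Fintype.card ι * M ^ q := by simp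
  calc wassersteinDist q f g ≤ (∑ i, ‖f i - g i‖ ^ q) ^ (1 / q) :=
        wassersteinDist_le q f g (Equiv.refl ι)
    _ ≤ (Fintype.card ι * M ^ q) ^ (1 / q) :=
        Real.rpow_le_rpow (by positivity) hsum (by positivity)

end wassersteinDist

theorem norm_sub_Diag4_le {x : Fin 4 → ℝ} {M : ℝ}
    (h₁ : |x 1 - x 0| ≤ 2 * M) (h₃ : |x 3 - x 2| ≤ 2 * M) : ‖x - Diag4 x‖ ≤ M := by
  have hM : 0 ≤ M := by linarith [abs_nonneg (x 1 - x 0)]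
  rw [pi_norm_le_iff_of_nonneg hM]
  rw [abs_le] at h₁ h₃
  intro k
  fin_cases k <;>
    simp only [Diag4, Fin.isValue, Fin.zero_eta, Fin.mk_one, Fin.reduceFinMk, Pi.sub_apply,
      Matrix.cons_val, Matrix.cons_val_zero, Matrix.cons_val_one, Real.norm_eq_abs, abs_le] <;>
    constructor <;> linarith

theorem norm_sub_Diag4_le_of_persistence_le {x : Fin 4 → ℝ} {M : ℝ}
    (h : x 0 ≤ x 1 ∧ x 2 ≤ x 3 ∧ x 1 - x 0 ≤ M ∧ x 3 - x 2 ≤ M) :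
    ‖x - Diag4 x‖ ≤ M := by
  obtain ⟨h01, h23, h₁, h₃⟩ := h
  apply norm_sub_Diag4_le
  · rw [abs_of_nonneg (sub_nonneg.2 h01)]
    linarith
  · rw [abs_of_nonneg (sub_nonneg.2 h23)]
    linarith

theorem stability_bound_general {ι₁ ι₂ : Type*} [Fintype ι₁] [Fintype ι₂]
    (q M : ℝ) (hq : 1 ≤ q)
    (f : ι₁ → Fin 4 → ℝ) (g : ι₂ → Fin 4 → ℝ)
    (hf : ∀ i, f i 0 ≤ f i 1 ∧ f i 2 ≤ f i 3 ∧
      f i 1 - f i 0 ≤ M ∧ f i 3 - f i 2 ≤ M)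
    (hg : ∀ j, g j 0 ≤ g j 1 ∧ g j 2 ≤ g j 3 ∧
      g j 1 - g j 0 ≤ M ∧ g j 3 - g j 2 ≤ M) :
    wassersteinDist q
        (Sum.elim f (fun j => Diag4 (g j)))
        (Sum.elim (fun i => Diag4 (f i)) g)
      ≤ ((Fintype.card ι₁ : ℝ) * M ^ q + (Fintype.card ι₂ : ℝ) * M ^ q) ^ (1 / q) := by
  have hclose : ∀ k, ‖Sum.elim f (fun j => Diag4 (g j)) k -
      Sum.elim (fun i => Diag4 (f i)) g k‖ ≤ M := by
    rintro (i | j)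
    · exact norm_sub_Diag4_le_of_persistence_le (hf i)
    · rw [Sum.elim_inr, Sum.elim_inr, norm_sub_rev]
      exact norm_sub_Diag4_le_of_persistence_le (hg j)
  have hbound := wassersteinDist_le_of_norm_sub_le (by linarith) hclose
  rwa [Fintype.card_sum, Nat.cast_add, add_mul] at hbound

/-- Stability bound (core of Lemma 4.1): if every birth–death quadruple of `f` and
`g` has persistences at most `M`, then the Wasserstein matching distance between the
diagonal-augmented families is at most `(n₁ M^q + n₂ M^q)^(1/q)`. -/
theorem stability_bound {ι₁ ι₂ : Type*} [Fintype ι₁] [Fintype ι₂]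
    (q M : ℝ) (hq : 1 ≤ q) (hM : 0 ≤ M)
    (f : ι₁ → Fin 4 → ℝ) (g : ι₂ → Fin 4 → ℝ)
    (hf : ∀ i, f i 0 ≤ f i 1 ∧ f i 2 ≤ f i 3 ∧
      f i 1 - f i 0 ≤ M ∧ f i 3 - f i 2 ≤ M)
    (hg : ∀ j, g j 0 ≤ g j 1 ∧ g j 2 ≤ g j 3 ∧
      g j 1 - g j 0 ≤ M ∧ g j 3 - g j 2 ≤ M) :
    wassersteinDist q
        (Sum.elim f (fun j => Diag4 (g j)))
        (Sum.elim (fun i => Diag4 (f i)) g)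
      ≤ ((Fintype.card ι₁ : ℝ) * M ^ q + (Fintype.card ι₂ : ℝ) * M ^ q) ^ (1 / q) :=
  stability_bound_general q M hq f g hf hg
end
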